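/- arXiv:cs/0207028 — 10 statements merged into one kernel-verified Lean document; each statement's English description precedes it below -/
import Mathlib

section
/- For every integer k ≥ 1 and every feasible solution (α, d, f) of the first factor-revealing LP, the objective value satisfies Σ_{j=1}^{k} α_j ≤ 1.861 · (f + Σ_{j=1}^{k} d_j). In particular, the optimal value z_k of the first factor-revealing LP is at most 1.861 for every k. -/
/-- Feasibility for the first factor-revealing LP with `k` indices `1,…,k`. -/
def FRLP1Feasible (k : ℕ) (α d : ℕ → ℝ) (f : ℝ) : Prop :=
  (∀ j ∈ Finset.Icc 1 k, 0 ≤ α j) ∧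
  (∀ j ∈ Finset.Icc 1 k, 0 ≤ d j) ∧
  0 ≤ f ∧
  (∀ j, 1 ≤ j → j < k → α j ≤ α (j + 1)) ∧
  (∀ j ∈ Finset.Icc 1 k, ∀ l ∈ Finset.Icc 1 k, α j ≤ α l + d j + d l) ∧
  (∀ j ∈ Finset.Icc 1 k, ∑ l ∈ Finset.Icc j k, max (α j - d l) 0 ≤ f)

/-!
Stretching a feasible solution by a factor `m` (repeating every index `m` times and replacing
`f` by `m f`) gives a feasible solution of size `m k` in which both sides of the inequality are
multiplied by `m`. Take `m = 20` and cut `1, …, 20 k` into 20 consecutive blocks of length `k`.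
Summing the constraints over blocks and dividing by `k` shows that the block sums `A_i`, `D_i`
satisfy `A_i ≤ A_e + D_i + D_e` and `∑_{a ≤ b < c} (A_i - D_b) ≤ f` whenever block `i` precedes
block `a`. A nonnegative combination of finitely many of these linear constraints on `A`, `D`, `f`
already gives `∑ A_i ≤ 1.861 (f + ∑ D_i)`.
-/

open Finset

section

variable {M : Type*} [AddCommMonoid M]

/-- Repeats every value of `x` `m` times, since `(j + m - 1) / m = ⌈j / m⌉`. -/
def stretch (m : ℕ) (x : ℕ → M) (j : ℕ) : M := x ((j + m - 1) / m)

def blockSum (n : ℕ) (x : ℕ → M) (i : ℕ) : M := ∑ j ∈ Ioc (i * n) ((i + 1) * n), x j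

theorem sum_Ico_blockSum (n : ℕ) (x : ℕ → M) (a c : ℕ) :
    ∑ i ∈ Ico a c, blockSum n x i = ∑ j ∈ Ioc (a * n) (c * n), x j := by
  rcases le_or_gt a c with hac | hca
  · induction c, hac using Nat.le_induction with
    | base => simp
    | succ c hac ih =>
      rw [sum_Ico_succ_top hac, ih, blockSum,
        sum_Ioc_consecutive _ (Nat.mul_le_mul_right n hac) (Nat.mul_le_mul_right n c.le_succ)]
  · rw [Ico_eq_empty_of_le hca.le, Ioc_eq_empty_of_le (Nat.mul_le_mul_right n hca.le),
      sum_empty, sum_empty]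

theorem stretch_index_eq_of_mem_Ioc {m i j : ℕ} (hj : j ∈ Ioc (i * m) ((i + 1) * m)) :
    (j + m - 1) / m = i + 1 := by
  rw [mem_Ioc] at hj
  apply Nat.div_eq_of_lt_le <;> simp only [add_mul, one_mul] at hj ⊢ <;> omega

theorem blockSum_stretch (m : ℕ) (x : ℕ → M) (i : ℕ) :
    blockSum m (stretch m x) i = m • x (i + 1) := by
  unfold blockSum stretch
  rw [sum_congr rfl fun j hj => congrArg x (stretch_index_eq_of_mem_Ioc hj), sum_const,
    Nat.card_Ioc, add_mul, one_mul, Nat.add_sub_cancel_left]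

theorem sum_Ioc_stretch (m : ℕ) (x : ℕ → M) (a b : ℕ) :
    ∑ j ∈ Ioc (m * a) (m * b), stretch m x j = m • ∑ i ∈ Ioc a b, x i := by
  rw [mul_comm m a, mul_comm m b, ← sum_Ico_blockSum, ← Ico_add_one_add_one_eq_Ioc,
    ← sum_Ico_add', smul_sum]
  exact sum_congr rfl fun i _ => blockSum_stretch m x i

end

theorem stretch_index_mem {m k j : ℕ} (hm : 0 < m) (hj : j ∈ Icc 1 (m * k)) :
    (j + m - 1) / m ∈ Icc 1 k := by
  rw [mem_Icc] at hj ⊢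
  constructor
  · rw [Nat.le_div_iff_mul_le hm]; omega
  · rw [Nat.div_le_iff_le_mul_add_pred hm]; omega

theorem mul_stretch_index_sub_one_lt {m j : ℕ} (hj : 0 < j) :
    m * ((j + m - 1) / m - 1) < j := by
  have := Nat.div_mul_le_self (j + m - 1) m
  rw [Nat.mul_sub_one, mul_comm]; omega

theorem FRLP1Feasible.sum_sub_le {k : ℕ} {α d : ℕ → ℝ} {f : ℝ} (h : FRLP1Feasible k α d f)
    {j : ℕ} (hj : j ∈ Icc 1 k) {s : Finset ℕ} (hs : s ⊆ Icc j k) :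
    ∑ l ∈ s, (α j - d l) ≤ f :=
  calc ∑ l ∈ s, (α j - d l)
      ≤ ∑ l ∈ s, max (α j - d l) 0 := sum_le_sum fun _ _ => le_max_left _ _
    _ ≤ ∑ l ∈ Icc j k, max (α j - d l) 0 :=
        sum_le_sum_of_subset_of_nonneg hs fun _ _ _ => le_max_right _ _
    _ ≤ f := h.2.2.2.2.2 j hj

theorem FRLP1Feasible.stretch {k m : ℕ} {α d : ℕ → ℝ} {f : ℝ} (h : FRLP1Feasible k α d f)
    (hm : 0 < m) : FRLP1Feasible (m * k) (stretch m α) (stretch m d) (m * f) := by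
  obtain ⟨hα, hd, hf, hmono, hpair, htail⟩ := h
  refine ⟨fun j hj => hα _ (stretch_index_mem hm hj), fun j hj => hd _ (stretch_index_mem hm hj),
    by positivity, fun j hj hjk => ?_, fun j hj l hl => ?_, fun j hj => ?_⟩
  · have hnext : (j + 1 + m - 1) / m = (j + m - 1) / m ∨
        (j + 1 + m - 1) / m = (j + m - 1) / m + 1 := by
      rw [show j + 1 + m - 1 = j + m - 1 + 1 by omega, Nat.succ_div]
      split_ifs <;> simp
    rcases hnext with hnext | hnext
    · exact (congrArg α hnext).ge
    · have hJ := stretch_index_mem hm (mem_Icc.2 ⟨hj, hjk.le⟩)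
      have hJ' := stretch_index_mem hm (mem_Icc.2 ⟨by omega, hjk⟩)
      rw [hnext, mem_Icc] at hJ'
      rw [_root_.stretch, _root_.stretch, hnext]
      exact hmono _ (mem_Icc.1 hJ).1 (by omega)
  · exact hpair _ (stretch_index_mem hm hj) _ (stretch_index_mem hm hl)
  · set J := (j + m - 1) / m
    have hJ := stretch_index_mem hm hj
    have hJj : m * (J - 1) < j := mul_stretch_index_sub_one_lt (mem_Icc.1 hj).1
    calc ∑ l ∈ Icc j (m * k), max (_root_.stretch m α j - _root_.stretch m d l) 0
        ≤ ∑ l ∈ Ioc (m * (J - 1)) (m * k), _root_.stretch m (fun l => max (α J - d l) 0) l :=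
          sum_le_sum_of_subset_of_nonneg (fun l hl => by simp only [mem_Icc, mem_Ioc] at hl ⊢; omega)
            fun _ _ _ => le_max_right _ _
      _ = m • ∑ l ∈ Ioc (J - 1) k, max (α J - d l) 0 := sum_Ioc_stretch m _ _ _
      _ ≤ m * f := by
          rw [nsmul_eq_mul, ← Icc_add_one_left_eq_Ioc, Nat.sub_add_cancel (mem_Icc.1 hJ).1]
          exact mul_le_mul_of_nonneg_left (htail J hJ) (Nat.cast_nonneg m)

theorem card_Ioc_block (n i : ℕ) : (Ioc (i * n) ((i + 1) * n)).card = n := by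
  rw [Nat.card_Ioc, add_mul, one_mul, Nat.add_sub_cancel_left]

section

variable {N n : ℕ} {α d : ℕ → ℝ} {f : ℝ}

theorem mem_Icc_of_mem_block {i j : ℕ} (hi : i < N) (hj : j ∈ Ioc (i * n) ((i + 1) * n)) :
    j ∈ Icc 1 (N * n) := by
  have := Nat.mul_le_mul_right n (show i + 1 ≤ N from hi)
  simp only [mem_Ioc, mem_Icc] at hj ⊢
  omega

theorem blockSum_nonneg {x : ℕ → ℝ} (hx : ∀ j ∈ Icc 1 (N * n), 0 ≤ x j) {i : ℕ} (hi : i < N) :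
    0 ≤ blockSum n x i :=
  sum_nonneg fun _ hj => hx _ (mem_Icc_of_mem_block hi hj)

theorem FRLP1Feasible.blockSum_le (h : FRLP1Feasible (N * n) α d f) (hn : 0 < n) {i e : ℕ}
    (hi : i < N) (he : e < N) :
    blockSum n α i ≤ blockSum n α e + blockSum n d i + blockSum n d e := by
  have hpair : ∀ j ∈ Ioc (i * n) ((i + 1) * n), ∀ l ∈ Ioc (e * n) ((e + 1) * n),
      α j ≤ α l + d j + d l := fun j hj l hl =>
    h.2.2.2.2.1 j (mem_Icc_of_mem_block hi hj) l (mem_Icc_of_mem_block he hl)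
  have := sum_le_sum fun j hj => sum_le_sum (hpair j hj)
  simp only [sum_add_distrib, sum_const, card_Ioc_block, nsmul_eq_mul, ← mul_sum, ← mul_add]
    at this
  exact le_of_mul_le_mul_left this (Nat.cast_pos.2 hn)

theorem FRLP1Feasible.sum_Ico_blockSum_sub_le (h : FRLP1Feasible (N * n) α d f) (hn : 0 < n)
    {i a c : ℕ} (hia : i < a) (hc : c ≤ N) :
    ∑ b ∈ Ico a c, (blockSum n α i - blockSum n d b) ≤ f := by
  rcases le_or_gt c a with hca | hac
  · rw [Ico_eq_empty_of_le hca, sum_empty]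
    exact h.2.2.1
  have hrow : ∀ j ∈ Ioc (i * n) ((i + 1) * n),
      ((c - a : ℕ) : ℝ) * n * α j - ∑ l ∈ Ioc (a * n) (c * n), d l ≤ f := by
    intro j hj
    have hia' := Nat.mul_le_mul_right n (show i + 1 ≤ a from hia)
    have hcN := Nat.mul_le_mul_right n hc
    have := h.sum_sub_le (mem_Icc_of_mem_block (hia.trans_le (hac.le.trans hc)) hj)
      (s := Ioc (a * n) (c * n)) fun l hl => by simp only [mem_Ioc, mem_Icc] at hj hl ⊢; omega
    rwa [sum_sub_distrib, sum_const, Nat.card_Ioc, ← Nat.sub_mul, nsmul_eq_mul, Nat.cast_mul]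
      at this
  have hsum := sum_le_card_nsmul _ _ _ hrow
  rw [card_Ioc_block, sum_sub_distrib, sum_const, card_Ioc_block, ← mul_sum, nsmul_eq_mul,
    nsmul_eq_mul] at hsum
  rw [sum_sub_distrib, sum_const, Nat.card_Ico, sum_Ico_blockSum, nsmul_eq_mul, blockSum]
  exact le_of_mul_le_mul_left (by linarith) (Nat.cast_pos.2 hn)

end

theorem sum_range_twenty_le {A D : ℕ → ℝ} {f : ℝ} (hD : ∀ i < 20, 0 ≤ D i) (hf : 0 ≤ f)
    (hpair : ∀ i e, i < 20 → e < 20 → A i ≤ A e + D i + D e)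
    (htail : ∀ i a c, i < a → c ≤ 20 → ∑ b ∈ Ico a c, (A i - D b) ≤ f) :
    ∑ i ∈ range 20, A i ≤ 1.861 * (f + ∑ i ∈ range 20, D i) := by
  have tail (i a c : ℕ) (hia : i < a := by norm_num) (hc : c ≤ 20 := by norm_num) :
      ∑ b ∈ range (c - a), (A i - D (a + b)) ≤ f := by
    simpa only [sum_Ico_eq_sum_range] using htail i a c hia hc
  have pair (i e : ℕ) (hi : i < 20 := by norm_num) (he : e < 20 := by norm_num) :=
    hpair i e hi he
  -- The constraints used by a dual certificate of this 20-block LP; `linarith` finds the weights.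
  have := tail 0 1 13
  have := tail 1 2 14
  have := tail 2 3 14
  have := tail 3 4 14
  have := tail 4 5 14
  have := tail 4 5 20
  have := tail 5 6 20
  have := tail 6 7 20
  have := tail 7 8 20
  have := tail 8 9 20
  have := tail 9 10 20
  have := tail 10 11 20
  have := tail 11 12 20
  have := tail 12 13 20
  have := tail 13 14 20
  simp only [sum_range_succ, sum_range_zero, Nat.reduceSub, Nat.reduceAdd] at *
  linarith [hD 9 (by norm_num), pair 7 5, pair 8 2, pair 8 5, pair 9 1, pair 9 2, pair 10 0,
    pair 10 7, pair 11 3, pair 12 6, pair 13 1, pair 14 2, pair 14 4, pair 15 2, pair 16 1,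
    pair 17 0, pair 17 6, pair 18 3, pair 18 4, pair 19 0]

/-- Every feasible solution of the first factor-revealing LP has objective value at most
`1.861 · (f + Σ d_j)`; in particular `z_k ≤ 1.861` for every `k ≥ 1`. -/
theorem frlp1_objective_le (k : ℕ) (hk : 1 ≤ k) (α d : ℕ → ℝ) (f : ℝ)
    (hfeas : FRLP1Feasible k α d f) :
    ∑ j ∈ Finset.Icc 1 k, α j ≤ 1.861 * (f + ∑ j ∈ Finset.Icc 1 k, d j) := by
  have h20 := hfeas.stretch (m := 20) (by norm_num)
  have hbound := sum_range_twenty_le (fun i hi => blockSum_nonneg h20.2.1 hi) h20.2.2.1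
    (fun i e hi he => h20.blockSum_le hk hi he)
    (fun i a c hia hc => h20.sum_Ico_blockSum_sub_le hk hia hc)
  have hsum (x : ℕ → ℝ) :
      ∑ i ∈ range 20, blockSum k (stretch 20 x) i = 20 * ∑ j ∈ Icc 1 k, x j := by
    rw [range_eq_Ico, sum_Ico_blockSum, zero_mul, ← mul_zero 20, sum_Ioc_stretch,
      ← Icc_add_one_left_eq_Ioc, nsmul_eq_mul, Nat.cast_ofNat, zero_add]
  rw [hsum, hsum] at hbound
  linarith
end

section
/- Let k ≥ 1 and let (α, d, f) be a feasible solution of the first factor-revealing LP with k indices. Define α'_{2i−1} = α'_{2i} = α_i and d'_{2i−1} = d'_{2i} = d_i for 1 ≤ i ≤ k, and f' = 2f. Then (α', d', f') is a feasible solution of the first factor-revealing LP with 2k indices, Σ_{j=1}^{2k} α'_j = 2 Σ_{j=1}^{k} α_j, and f' + Σ_{j=1}^{2k} d'_j = 2(f + Σ_{j=1}^{k} d_j). Consequently, the optimal value z_k of the first factor-revealing LP satisfies z_k ≤ z_{2k}. -/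
/-- The optimal value `z_k` of the first factor-revealing LP: the supremum of the
ratios `(Σ α_j) / (f + Σ d_j)` over all feasible solutions. -/
noncomputable def frlp1Value (k : ℕ) : ℝ :=
  sSup { z : ℝ | ∃ α d : ℕ → ℝ, ∃ f : ℝ, FRLP1Feasible k α d f ∧
    z = (∑ j ∈ Finset.Icc 1 k, α j) / (f + ∑ j ∈ Finset.Icc 1 k, d j) }

/-! Doubling every index keeps the constraints: monotonicity and the pairwise constraints are
inherited index by index, and the tail sum from a copy of index `i` is at most twice the original
tail sum from `i`, hence at most `2f`. Objective and cost both double, so the ratio is unchanged.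
The suprema are finite because every ratio is at most `k`: the `l = j` term of constraint (iii)
gives `α_j ≤ f + d_j`. -/

open Finset

lemma sum_Icc_comp_half_succ {M : Type*} [AddCommMonoid M] (g : ℕ → M) {m : ℕ} (hm : 1 ≤ m)
    (k : ℕ) : ∑ l ∈ Icc (2 * m - 1) (2 * k), g ((l + 1) / 2) = 2 • ∑ l ∈ Icc m k, g l := by
  rcases lt_or_ge k (m - 1) with hk | hk
  · rw [Icc_eq_empty (by omega), Icc_eq_empty (by omega), sum_empty, sum_empty, smul_zero]
  induction k, hk using Nat.le_induction with
  | base => rw [Icc_eq_empty (by omega), Icc_eq_empty (by omega), sum_empty, sum_empty, smul_zero]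
  | succ n hn ih =>
    rw [show 2 * (n + 1) = 2 * n + 1 + 1 by ring, sum_Icc_succ_top (by omega),
      sum_Icc_succ_top (by omega), sum_Icc_succ_top (by omega), ih,
      show (2 * n + 1 + 1) / 2 = n + 1 by omega, show (2 * n + 1 + 1 + 1) / 2 = n + 1 by omega,
      smul_add, two_nsmul (g (n + 1)), add_assoc]

lemma sum_Icc_one_comp_half_succ {R : Type*} [NonAssocSemiring R] (g : ℕ → R) (k : ℕ) :
    ∑ j ∈ Icc 1 (2 * k), g ((j + 1) / 2) = 2 * ∑ j ∈ Icc 1 k, g j := by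
  simpa using sum_Icc_comp_half_succ g le_rfl k

namespace FRLP1Feasible

variable {k : ℕ} {α d : ℕ → ℝ} {f : ℝ}

lemma monotoneOn (h : FRLP1Feasible k α d f) : MonotoneOn α (Set.Icc 1 k) :=
  monotoneOn_of_le_succ Set.ordConnected_Icc fun j _ hj hsucc =>
    h.2.2.2.1 j hj.1 (Order.succ_eq_add_one j ▸ hsucc).2

lemma le_add_of_mem (h : FRLP1Feasible k α d f) {j : ℕ} (hj : j ∈ Icc 1 k) : α j ≤ f + d j := by
  have hterm : max (α j - d j) 0 ≤ f :=
    (single_le_sum (f := fun l => max (α j - d l) 0) (fun _ _ => le_max_right _ _)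
      (left_mem_Icc.2 (mem_Icc.1 hj).2)).trans (h.2.2.2.2.2 j hj)
  linarith [le_max_left (α j - d j) 0]

lemma ratio_le (h : FRLP1Feasible k α d f) :
    (∑ j ∈ Icc 1 k, α j) / (f + ∑ j ∈ Icc 1 k, d j) ≤ k := by
  have hcost : 0 ≤ f + ∑ j ∈ Icc 1 k, d j := add_nonneg h.2.2.1 (sum_nonneg h.2.1)
  refine div_le_of_le_mul₀ hcost (Nat.cast_nonneg k) ?_
  calc ∑ j ∈ Icc 1 k, α j ≤ ∑ _j ∈ Icc 1 k, (f + ∑ j ∈ Icc 1 k, d j) :=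
        sum_le_sum fun j hj => (h.le_add_of_mem hj).trans
          (add_le_add_right (single_le_sum h.2.1 hj) f)
    _ = k * (f + ∑ j ∈ Icc 1 k, d j) := by simp [mul_add]

lemma double (h : FRLP1Feasible k α d f) :
    FRLP1Feasible (2 * k) (fun j => α ((j + 1) / 2)) (fun j => d ((j + 1) / 2)) (2 * f) := by
  have hmono := h.monotoneOn
  obtain ⟨hα, hd, hf, -, hgap, hstar⟩ := h
  have half_mem {j : ℕ} (hj : j ∈ Icc 1 (2 * k)) : (j + 1) / 2 ∈ Icc 1 k := by
    simp only [mem_Icc] at hj ⊢; omega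
  refine ⟨fun j hj => hα _ (half_mem hj), fun j hj => hd _ (half_mem hj), by linarith,
    fun j hj hjk => ?_, fun j hj l hl => hgap _ (half_mem hj) _ (half_mem hl), fun j hj => ?_⟩
  · exact hmono (by simp only [Set.mem_Icc]; omega) (by simp only [Set.mem_Icc]; omega) (by omega)
  · set m := (j + 1) / 2
    have hm : m ∈ Icc 1 k := half_mem hj
    calc ∑ l ∈ Icc j (2 * k), max (α m - d ((l + 1) / 2)) 0
        ≤ ∑ l ∈ Icc (2 * m - 1) (2 * k), max (α m - d ((l + 1) / 2)) 0 :=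
          sum_le_sum_of_subset_of_nonneg (Icc_subset_Icc_left (by omega))
            fun _ _ _ => le_max_right _ _
      _ = 2 * ∑ l ∈ Icc m k, max (α m - d l) 0 := by
          rw [sum_Icc_comp_half_succ (fun l => max (α m - d l) 0) (mem_Icc.1 hm).1, two_nsmul,
            two_mul]
      _ ≤ 2 * f := by linarith [hstar m hm]

end FRLP1Feasible

lemma frlp1Feasible_zero (k : ℕ) : FRLP1Feasible k 0 0 0 := by
  simp [FRLP1Feasible]

lemma ratio_comp_half_succ (k : ℕ) (α d : ℕ → ℝ) (f : ℝ) :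
    (∑ j ∈ Icc 1 (2 * k), α ((j + 1) / 2)) / (2 * f + ∑ j ∈ Icc 1 (2 * k), d ((j + 1) / 2))
      = (∑ j ∈ Icc 1 k, α j) / (f + ∑ j ∈ Icc 1 k, d j) := by
  rw [sum_Icc_one_comp_half_succ, sum_Icc_one_comp_half_succ, ← mul_add,
    mul_div_mul_left _ _ two_ne_zero]

lemma bddAbove_frlp1Ratios (k : ℕ) :
    BddAbove { z : ℝ | ∃ α d : ℕ → ℝ, ∃ f : ℝ, FRLP1Feasible k α d f ∧
      z = (∑ j ∈ Icc 1 k, α j) / (f + ∑ j ∈ Icc 1 k, d j) } :=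
  ⟨k, by rintro _ ⟨α, d, f, h, rfl⟩; exact h.ratio_le⟩

lemma frlp1Value_le_two_mul (k : ℕ) : frlp1Value k ≤ frlp1Value (2 * k) :=
  csSup_le_csSup (bddAbove_frlp1Ratios (2 * k)) ⟨_, 0, 0, 0, frlp1Feasible_zero k, rfl⟩
    fun _ ⟨α, d, f, h, hz⟩ =>
      ⟨_, _, 2 * f, h.double, hz.trans (ratio_comp_half_succ k α d f).symm⟩

theorem frlp1_doubling_general (k : ℕ) (α d : ℕ → ℝ) (f : ℝ)
    (hfeas : FRLP1Feasible k α d f) :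
    FRLP1Feasible (2 * k) (fun j => α ((j + 1) / 2)) (fun j => d ((j + 1) / 2)) (2 * f) ∧
    ∑ j ∈ Finset.Icc 1 (2 * k), α ((j + 1) / 2) = 2 * ∑ j ∈ Finset.Icc 1 k, α j ∧
    2 * f + ∑ j ∈ Finset.Icc 1 (2 * k), d ((j + 1) / 2)
      = 2 * (f + ∑ j ∈ Finset.Icc 1 k, d j) ∧
    frlp1Value k ≤ frlp1Value (2 * k) :=
  ⟨hfeas.double, sum_Icc_one_comp_half_succ α k,
    by rw [sum_Icc_one_comp_half_succ d k, mul_add], frlp1Value_le_two_mul k⟩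

/-- Doubling a feasible solution of the first factor-revealing LP with `k` indices yields a
feasible solution with `2k` indices whose objective and cost both double; hence `z_k ≤ z_{2k}`. -/
theorem frlp1_doubling (k : ℕ) (hk : 1 ≤ k) (α d : ℕ → ℝ) (f : ℝ)
    (hfeas : FRLP1Feasible k α d f) :
    FRLP1Feasible (2 * k) (fun j => α ((j + 1) / 2)) (fun j => d ((j + 1) / 2)) (2 * f) ∧
    ∑ j ∈ Finset.Icc 1 (2 * k), α ((j + 1) / 2) = 2 * ∑ j ∈ Finset.Icc 1 k, α j ∧
    2 * f + ∑ j ∈ Finset.Icc 1 (2 * k), d ((j + 1) / 2)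
      = 2 * (f + ∑ j ∈ Finset.Icc 1 k, d j) ∧
    frlp1Value k ≤ frlp1Value (2 * k) :=
  frlp1_doubling_general k α d f hfeas
end

section
/- Let k ≥ 1 and let (α, d, f) be a feasible solution of the first factor-revealing LP. Then for all indices 1 ≤ j ≤ j' ≤ k one has (j' − j + 1) · α_j ≤ f + Σ_{i=j}^{j'} d_i. -/
/-! Only constraint (iii) matters: dropping the indices `l > j'` from its sum and replacing
each remaining term `max (α_j - d_l) 0` by `α_j - d_l` can only decrease it. -/

open Finset

theorem Finset.card_nsmul_le_sum_max_sub_add_sum {ι M : Type*} [AddCommGroup M] [LinearOrder M]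
    [IsOrderedAddMonoid M] (s : Finset ι) (c : M) (d : ι → M) :
    #s • c ≤ ∑ l ∈ s, max (c - d l) 0 + ∑ l ∈ s, d l := by
  calc #s • c = ∑ l ∈ s, (c - d l) + ∑ l ∈ s, d l := by
        rw [← sum_add_distrib, ← sum_const]
        simp only [sub_add_cancel]
    _ ≤ ∑ l ∈ s, max (c - d l) 0 + ∑ l ∈ s, d l := by
        gcongr with l
        exact le_max_left _ _

theorem FRLP1Feasible.sum_max_sub_le {k : ℕ} {α d : ℕ → ℝ} {f : ℝ}
    (hfeas : FRLP1Feasible k α d f) {j j' : ℕ} (hj : 1 ≤ j) (hjj' : j ≤ j') (hj' : j' ≤ k) :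
    ∑ l ∈ Icc j j', max (α j - d l) 0 ≤ f :=
  calc ∑ l ∈ Icc j j', max (α j - d l) 0 ≤ ∑ l ∈ Icc j k, max (α j - d l) 0 :=
        sum_le_sum_of_subset_of_nonneg (Icc_subset_Icc_right hj') fun _ _ _ => le_max_right _ _
    _ ≤ f := hfeas.2.2.2.2.2 j (mem_Icc.mpr ⟨hj, hjj'.trans hj'⟩)

theorem frlp1_interval_bound_general (k : ℕ) (α d : ℕ → ℝ) (f : ℝ)
    (hfeas : FRLP1Feasible k α d f) (j j' : ℕ) (hj : 1 ≤ j) (hjj' : j ≤ j') (hj' : j' ≤ k) :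
    ((j' - j + 1 : ℕ) : ℝ) * α j ≤ f + ∑ i ∈ Finset.Icc j j', d i := by
  have hcard : #(Icc j j') = j' - j + 1 := by rw [Nat.card_Icc]; omega
  calc ((j' - j + 1 : ℕ) : ℝ) * α j = #(Icc j j') • α j := by rw [hcard, nsmul_eq_mul]
    _ ≤ ∑ l ∈ Icc j j', max (α j - d l) 0 + ∑ i ∈ Icc j j', d i :=
        card_nsmul_le_sum_max_sub_add_sum _ _ _
    _ ≤ f + ∑ i ∈ Icc j j', d i := by gcongr; exact hfeas.sum_max_sub_le hj hjj' hj'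

/-- For a feasible solution of the first factor-revealing LP,
`(j' − j + 1) · α_j ≤ f + Σ_{i=j}^{j'} d_i` for all `1 ≤ j ≤ j' ≤ k`. -/
theorem frlp1_interval_bound (k : ℕ) (hk : 1 ≤ k) (α d : ℕ → ℝ) (f : ℝ)
    (hfeas : FRLP1Feasible k α d f) (j j' : ℕ) (hj : 1 ≤ j) (hjj' : j ≤ j') (hj' : j' ≤ k) :
    ((j' - j + 1 : ℕ) : ℝ) * α j ≤ f + ∑ i ∈ Finset.Icc j j', d i :=
  frlp1_interval_bound_general k α d f hfeas j j' hj hjj' hj'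
end

section
/- Let k ≥ 1 and let (α, d, f) be a feasible solution of the first factor-revealing LP. Define a cost matrix c between facilities i ∈ {1, …, k+1} and cities j ∈ {1, …, k} by: c_{ij} = α_j if 1 ≤ i = j ≤ k; c_{ij} = d_j if i = k+1; and c_{ij} = d_i + d_j + α_i otherwise (i.e., if 1 ≤ i ≤ k and i ≠ j). Then c satisfies the triangle inequality for bipartite connection costs: for all facilities i, i' ∈ {1, …, k+1} and all cities j, j' ∈ {1, …, k}, c_{ij} ≤ c_{i'j} + c_{i'j'} + c_{ij'}. -/
/-- The tight-example cost matrix built from a feasible solution of the first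
factor-revealing LP: facilities are `1,…,k+1`, cities are `1,…,k`. -/
noncomputable def tightCost (k : ℕ) (α d : ℕ → ℝ) (i j : ℕ) : ℝ :=
  if i = k + 1 then d j
  else if i = j then α j
  else d i + d j + α i

/-! The cost matrix is the restriction of a tree metric. Take a hub (facility `k + 1`) with
legs `1, …, k`: on leg `j` lie city `j` at distance `d j` from the hub and, beyond it,
facility `j` at further distance `α j`. Paths between different legs pass through the hub, and
the required inequality is the triangle inequality along `i → j' → i' → j`. -/

section Spider

variable {P β : Type*} [DecidableEq β] (h : P → ℝ) (b : P → β)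

/-- The metric of a star of paths: `h p` is the distance of `p` from the centre and `b p` the
leg it lies on. -/
noncomputable def spiderDist (p q : P) : ℝ :=
  if b p = b q then |h p - h q| else h p + h q

theorem spiderDist_comm (p q : P) : spiderDist h b p q = spiderDist h b q p := by
  simp only [spiderDist, eq_comm (a := b p), abs_sub_comm (h p), add_comm (h p)]

theorem spiderDist_triangle {p q r : P} (hp : 0 ≤ h p) (hq : 0 ≤ h q) (hr : 0 ≤ h r) :
    spiderDist h b p r ≤ spiderDist h b p q + spiderDist h b q r := by
  have same_leg := abs_sub_le (h p) (h q) (h r)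
  have via_centre : |h p - h r| ≤ h p + h r :=
    abs_sub_le_of_nonneg_of_le hp (le_add_of_nonneg_right hr) hr (le_add_of_nonneg_left hp)
  have hp_le : h p ≤ |h p - h q| + h q := by linarith [le_abs_self (h p - h q)]
  have hr_le : h r ≤ |h q - h r| + h q := by linarith [neg_abs_le (h q - h r)]
  unfold spiderDist
  split_ifs <;> first | linarith | grind

end Spider

section TightSpider

variable (k : ℕ) (α d : ℕ → ℝ)

/-- Facilities are `Sum.inl i`, cities `Sum.inr j`. -/
noncomputable def tightHeight : ℕ ⊕ ℕ → ℝ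
  | .inl i => if i = k + 1 then 0 else d i + α i
  | .inr j => d j

/-- The hub is put on leg `0`, which no city uses. -/
def tightLeg : ℕ ⊕ ℕ → ℕ
  | .inl i => if i = k + 1 then 0 else i
  | .inr j => j

theorem tightCost_eq_spiderDist {i j : ℕ} (hj : 1 ≤ j) (hαj : 0 ≤ α j) :
    tightCost k α d i j =
      spiderDist (tightHeight k α d) (tightLeg k) (.inl i) (.inr j) := by
  simp only [tightCost, spiderDist, tightHeight, tightLeg]
  split_ifs <;> first | omega | (subst_vars; simp [abs_of_nonneg hαj]) | ring

theorem tightHeight_facility_nonneg (hα : ∀ j ∈ Finset.Icc 1 k, 0 ≤ α j)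
    (hd : ∀ j ∈ Finset.Icc 1 k, 0 ≤ d j) {i : ℕ} (hi : i ∈ Finset.Icc 1 (k + 1)) :
    0 ≤ tightHeight k α d (.inl i) := by
  rw [Finset.mem_Icc] at hi
  by_cases hik : i = k + 1
  · simp [tightHeight, hik]
  · have hi : i ∈ Finset.Icc 1 k := Finset.mem_Icc.2 ⟨hi.1, by omega⟩
    simpa [tightHeight, hik] using add_nonneg (hd i hi) (hα i hi)

end TightSpider

theorem tightCost_triangle_general (k : ℕ) (α d : ℕ → ℝ) (f : ℝ)
    (hfeas : FRLP1Feasible k α d f) :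
    ∀ i ∈ Finset.Icc 1 (k + 1), ∀ i' ∈ Finset.Icc 1 (k + 1),
      ∀ j ∈ Finset.Icc 1 k, ∀ j' ∈ Finset.Icc 1 k,
        tightCost k α d i j ≤ tightCost k α d i' j + tightCost k α d i' j' + tightCost k α d i j' := by
  obtain ⟨hα, hd, -⟩ := hfeas
  intro i hi i' hi' j hj j' hj'
  set D := spiderDist (tightHeight k α d) (tightLeg k)
  have cost_eq {i j : ℕ} (hj : j ∈ Finset.Icc 1 k) : tightCost k α d i j = D (.inl i) (.inr j) :=
    tightCost_eq_spiderDist k α d (Finset.mem_Icc.1 hj).1 (hα j hj)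
  have via_j' : D (.inl i) (.inr j) ≤ D (.inl i) (.inr j') + D (.inr j') (.inr j) :=
    spiderDist_triangle _ _ (tightHeight_facility_nonneg k α d hα hd hi) (hd j' hj') (hd j hj)
  have via_i' : D (.inr j') (.inr j) ≤ D (.inr j') (.inl i') + D (.inl i') (.inr j) :=
    spiderDist_triangle _ _ (hd j' hj') (tightHeight_facility_nonneg k α d hα hd hi') (hd j hj)
  have hsymm : D (.inr j') (.inl i') = D (.inl i') (.inr j') := spiderDist_comm _ _ _ _
  rw [cost_eq hj, cost_eq hj, cost_eq hj', cost_eq hj']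
  linarith

/-- The cost matrix of the tight example satisfies the triangle inequality for
bipartite connection costs: `c_{ij} ≤ c_{i'j} + c_{i'j'} + c_{ij'}`. -/
theorem tightCost_triangle (k : ℕ) (hk : 1 ≤ k) (α d : ℕ → ℝ) (f : ℝ)
    (hfeas : FRLP1Feasible k α d f) :
    ∀ i ∈ Finset.Icc 1 (k + 1), ∀ i' ∈ Finset.Icc 1 (k + 1),
      ∀ j ∈ Finset.Icc 1 k, ∀ j' ∈ Finset.Icc 1 k,
        tightCost k α d i j ≤ tightCost k α d i' j + tightCost k α d i' j' + tightCost k α d i j' :=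
  tightCost_triangle_general k α d f hfeas
end

section
/- Let k ≥ 1 and let (α, d, r, f) be a feasible solution of the second factor-revealing LP. Then for all indices 1 ≤ i ≤ i' ≤ k one has (i' − i + 1) · α_i ≤ Σ_{j=i}^{i'} d_j + f − Σ_{j=1}^{i−1} max(r_{j,i} − d_j, 0). -/
/-- Feasibility for the second factor-revealing LP with `k` indices `1,…,k`.
`r j i` is the variable `r_{j,i}` for `1 ≤ j < i ≤ k`. -/
def FRLP2Feasible (k : ℕ) (α d : ℕ → ℝ) (r : ℕ → ℕ → ℝ) (f : ℝ) : Prop :=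
  (∀ i ∈ Finset.Icc 1 k, 0 ≤ α i) ∧
  (∀ i ∈ Finset.Icc 1 k, 0 ≤ d i) ∧
  0 ≤ f ∧
  (∀ j i, 1 ≤ j → j < i → i ≤ k → 0 ≤ r j i) ∧
  (∀ i, 1 ≤ i → i < k → α i ≤ α (i + 1)) ∧
  (∀ j i, 1 ≤ j → j < i → i < k → r j (i + 1) ≤ r j i) ∧
  (∀ j i, 1 ≤ j → j < i → i ≤ k → α i ≤ r j i + d i + d j) ∧
  (∀ i ∈ Finset.Icc 1 k,
    ∑ j ∈ Finset.Icc 1 (i - 1), max (r j i - d j) 0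
      + ∑ j ∈ Finset.Icc i k, max (α i - d j) 0 ≤ f)

theorem Finset.sum_sub_le_sum_max_sub_zero {ι M : Type*} [AddCommGroup M] [LinearOrder M]
    [IsOrderedAddMonoid M] {s t : Finset ι} (hst : s ⊆ t) (a : M) (d : ι → M) :
    ∑ j ∈ s, (a - d j) ≤ ∑ j ∈ t, max (a - d j) 0 :=
  calc ∑ j ∈ s, (a - d j) ≤ ∑ j ∈ s, max (a - d j) 0 :=
        Finset.sum_le_sum fun _ _ => le_max_left _ _
    _ ≤ ∑ j ∈ t, max (a - d j) 0 :=
        Finset.sum_le_sum_of_subset_of_nonneg hst fun _ _ _ => le_max_right _ _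

theorem frlp2_interval_bound_general (k : ℕ) (α d : ℕ → ℝ) (r : ℕ → ℕ → ℝ) (f : ℝ)
    (hfeas : FRLP2Feasible k α d r f) (i i' : ℕ) (hi : 1 ≤ i) (hii' : i ≤ i') (hi' : i' ≤ k) :
    ((i' - i + 1 : ℕ) : ℝ) * α i
      ≤ (∑ j ∈ Finset.Icc i i', d j) + f - ∑ j ∈ Finset.Icc 1 (i - 1), max (r j i - d j) 0 := by
  -- constraint (iv) at index `i`
  have hcharge := hfeas.2.2.2.2.2.2.2 i (Finset.mem_Icc.2 ⟨hi, hii'.trans hi'⟩)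
  have hcover :=
    Finset.sum_sub_le_sum_max_sub_zero (Finset.Icc_subset_Icc_right (a := i) hi') (α i) d
  rw [Finset.sum_sub_distrib, Finset.sum_const, Nat.card_Icc, nsmul_eq_mul,
    show i' + 1 - i = i' - i + 1 by omega] at hcover
  linarith

/-- For a feasible solution of the second factor-revealing LP, for all `1 ≤ i ≤ i' ≤ k`,
`(i' − i + 1) · α_i ≤ Σ_{j=i}^{i'} d_j + f − Σ_{j=1}^{i−1} max(r_{j,i} − d_j, 0)`. -/
theorem frlp2_interval_bound (k : ℕ) (hk : 1 ≤ k) (α d : ℕ → ℝ) (r : ℕ → ℕ → ℝ) (f : ℝ)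
    (hfeas : FRLP2Feasible k α d r f) (i i' : ℕ) (hi : 1 ≤ i) (hii' : i ≤ i') (hi' : i' ≤ k) :
    ((i' - i + 1 : ℕ) : ℝ) * α i
      ≤ (∑ j ∈ Finset.Icc i i', d j) + f - ∑ j ∈ Finset.Icc 1 (i - 1), max (r j i - d j) 0 :=
  frlp2_interval_bound_general k α d r f hfeas i i' hi hii' hi'
end

section
/- Let k ≥ 1 and let (α, d, r, f) be a feasible solution of the second factor-revealing LP. Then for all indices 1 ≤ ℓ < m ≤ i ≤ k one has α_i ≤ d_i + 2·d_ℓ + max(r_{ℓ,m} − d_ℓ, 0). -/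
namespace FRLP2Feasible

variable {k : ℕ} {α d : ℕ → ℝ} {r : ℕ → ℕ → ℝ} {f : ℝ}

theorem antitoneOn_r (h : FRLP2Feasible k α d r f) {j : ℕ} (hj : 1 ≤ j) :
    AntitoneOn (r j) (Set.Icc (j + 1) k) :=
  antitoneOn_of_add_one_le Set.ordConnected_Icc fun _ _ ha ha' =>
    h.2.2.2.2.2.1 j _ hj ha.1 ha'.2

theorem alpha_le_r_add (h : FRLP2Feasible k α d r f) {j i : ℕ} (hj : 1 ≤ j) (hji : j < i)
    (hik : i ≤ k) : α i ≤ r j i + d i + d j :=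
  h.2.2.2.2.2.2.1 j i hj hji hik

end FRLP2Feasible

theorem frlp2_switch_bound_general (k : ℕ) (α d : ℕ → ℝ) (r : ℕ → ℕ → ℝ) (f : ℝ)
    (hfeas : FRLP2Feasible k α d r f) (l m i : ℕ) (hl : 1 ≤ l) (hlm : l < m) (hmi : m ≤ i)
    (hik : i ≤ k) :
    α i ≤ d i + 2 * d l + max (r l m - d l) 0 := by
  have hr : r l i ≤ r l m :=
    hfeas.antitoneOn_r hl ⟨hlm, hmi.trans hik⟩ ⟨hlm.trans_le hmi, hik⟩ hmi
  calc α i ≤ r l i + d i + d l := hfeas.alpha_le_r_add hl (hlm.trans_le hmi) hik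
    _ ≤ d i + 2 * d l + (r l m - d l) := by linarith
    _ ≤ d i + 2 * d l + max (r l m - d l) 0 := by gcongr; exact le_max_left _ _

/-- For a feasible solution of the second factor-revealing LP, for all `1 ≤ ℓ < m ≤ i ≤ k`,
`α_i ≤ d_i + 2·d_ℓ + max(r_{ℓ,m} − d_ℓ, 0)`. -/
theorem frlp2_switch_bound (k : ℕ) (hk : 1 ≤ k) (α d : ℕ → ℝ) (r : ℕ → ℕ → ℝ) (f : ℝ)
    (hfeas : FRLP2Feasible k α d r f) (l m i : ℕ) (hl : 1 ≤ l) (hlm : l < m) (hmi : m ≤ i)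
    (hik : i ≤ k) :
    α i ≤ d i + 2 * d l + max (r l m - d l) 0 :=
  frlp2_switch_bound_general k α d r f hfeas l m i hl hlm hmi hik
end

section
/- For every integer k ≥ 1 and every feasible solution (α, d, r, f) of the second factor-revealing LP, one has Σ_{i=1}^{k} α_i − f ≤ (2 − 1/k) · Σ_{i=1}^{k} d_i. In particular, Σ_{i=1}^{k} α_i ≤ f + 2 · Σ_{i=1}^{k} d_i. -/
/-!
Bounding `r_{j,i}` below by `α_i - d_i - d_j` in constraint (iv) for the index `i` gives
`k α_i ≤ f + Σ_{j<i} (d_i + d_j) + Σ_j d_j`. Summing over `i`, every `d_j` occurs in exactly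
`k - 1` of the pairs `j < i`, so `k Σ α_i ≤ k f + (2k - 1) Σ d_i`; divide by `k`.
-/

open Finset

theorem Finset.sum_Icc_one_pred_add_sum_Icc {M : Type*} [AddCommMonoid M] (g : ℕ → M)
    {i k : ℕ} (hi : 1 ≤ i) (hik : i ≤ k) :
    ∑ j ∈ Icc 1 (i - 1), g j + ∑ j ∈ Icc i k, g j = ∑ j ∈ Icc 1 k, g j := by
  have hIcc : ∀ a b : ℕ, Icc (a + 1) b = Ioc a b := fun a b => Icc_add_one_left_eq_Ioc a b
  rw [← Nat.sub_add_cancel hi, hIcc, Nat.add_sub_cancel, ← zero_add 1, hIcc, hIcc,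
    sum_Ioc_consecutive] <;> omega

theorem Finset.sum_Icc_sum_Icc_pred_add_eq {R : Type*} [CommRing R] (d : ℕ → R) (k : ℕ) :
    ∑ i ∈ Icc 1 k, ∑ j ∈ Icc 1 (i - 1), (d i + d j) = ((k : R) - 1) * ∑ i ∈ Icc 1 k, d i := by
  induction k with
  | zero => simp
  | succ k ih =>
    rw [sum_Icc_succ_top (by omega), sum_Icc_succ_top (by omega), ih, Nat.add_sub_cancel,
      sum_add_distrib, sum_const, Nat.card_Icc, Nat.add_sub_cancel, nsmul_eq_mul]
    push_cast
    ring

namespace FRLP2Feasible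

variable {k : ℕ} {α d : ℕ → ℝ} {r : ℕ → ℕ → ℝ} {f : ℝ}

theorem natCast_mul_le (h : FRLP2Feasible k α d r f) {i : ℕ} (hi : i ∈ Icc 1 k) :
    (k : ℝ) * α i ≤ f + ∑ j ∈ Icc 1 (i - 1), (d i + d j) + ∑ j ∈ Icc 1 k, d j := by
  obtain ⟨-, -, -, -, -, -, hα_le, hf⟩ := h
  obtain ⟨hi1, hik⟩ := mem_Icc.mp hi
  have hlow : ∑ j ∈ Icc 1 (i - 1), (α i - (d i + d j) - d j)
      ≤ ∑ j ∈ Icc 1 (i - 1), max (r j i - d j) 0 := by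
    refine sum_le_sum fun j hj => ?_
    obtain ⟨hj1, hji⟩ := mem_Icc.mp hj
    have := hα_le j i hj1 (by omega) hik
    exact le_max_of_le_left (by linarith)
  have hhigh : ∑ j ∈ Icc i k, (α i - d j) ≤ ∑ j ∈ Icc i k, max (α i - d j) 0 :=
    sum_le_sum fun j _ => le_max_left _ _
  have hsplit := fun g : ℕ → ℝ => sum_Icc_one_pred_add_sum_Icc g hi1 hik
  have hconst : ∑ j ∈ Icc 1 k, α i = k * α i := by simp
  have hiv := hf i hi
  simp only [sum_sub_distrib] at hlow hhigh
  linarith [hsplit (fun _ => α i), hsplit d]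

theorem natCast_mul_sum_le (h : FRLP2Feasible k α d r f) :
    (k : ℝ) * ∑ i ∈ Icc 1 k, α i ≤ k * f + (2 * k - 1) * ∑ i ∈ Icc 1 k, d i :=
  calc (k : ℝ) * ∑ i ∈ Icc 1 k, α i
      ≤ ∑ i ∈ Icc 1 k, (f + ∑ j ∈ Icc 1 (i - 1), (d i + d j) + ∑ j ∈ Icc 1 k, d j) := by
        rw [mul_sum]
        exact sum_le_sum fun i hi => h.natCast_mul_le hi
    _ = k * f + (2 * k - 1) * ∑ i ∈ Icc 1 k, d i := by
        rw [sum_add_distrib (s := Icc 1 k), sum_add_distrib (s := Icc 1 k),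
          sum_Icc_sum_Icc_pred_add_eq, sum_const, sum_const, Nat.card_Icc, Nat.add_sub_cancel,
          nsmul_eq_mul, nsmul_eq_mul]
        ring

end FRLP2Feasible

/-- For every feasible solution of the second factor-revealing LP,
`Σ α_i − f ≤ (2 − 1/k) · Σ d_i`; in particular `Σ α_i ≤ f + 2 Σ d_i`. -/
theorem frlp2_lmp_bound (k : ℕ) (hk : 1 ≤ k) (α d : ℕ → ℝ) (r : ℕ → ℕ → ℝ) (f : ℝ)
    (hfeas : FRLP2Feasible k α d r f) :
    (∑ i ∈ Finset.Icc 1 k, α i) - f ≤ (2 - 1 / (k : ℝ)) * ∑ i ∈ Finset.Icc 1 k, d i ∧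
    ∑ i ∈ Finset.Icc 1 k, α i ≤ f + 2 * ∑ i ∈ Finset.Icc 1 k, d i := by
  have hk0 : (0 : ℝ) < k := by exact_mod_cast hk
  have hd : 0 ≤ ∑ i ∈ Icc 1 k, d i := sum_nonneg hfeas.2.1
  have hbound : (∑ i ∈ Icc 1 k, α i) - f ≤ (2 - 1 / (k : ℝ)) * ∑ i ∈ Icc 1 k, d i := by
    rw [← mul_le_mul_iff_right₀ hk0, mul_sub, ← mul_assoc, mul_sub, mul_one_div_cancel hk0.ne']
    linarith [hfeas.natCast_mul_sum_le]
  refine ⟨hbound, ?_⟩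
  have : 0 ≤ 1 / (k : ℝ) * ∑ i ∈ Icc 1 k, d i := by positivity
  linarith
end

section
/- Let k ≥ 2. Define α_1 = 2 − 1/k and α_i = 2 for 2 ≤ i ≤ k; d_1 = 1 and d_i = 0 for 2 ≤ i ≤ k; r_{1,i} = 1 for 1 < i ≤ k and r_{j,i} = 2 for 2 ≤ j < i ≤ k; and f = 2(k − 1). Then (α, d, r, f) is a feasible solution of the second factor-revealing LP, and it satisfies Σ_{i=1}^{k} α_i − f = (2 − 1/k) · Σ_{i=1}^{k} d_i (with Σ_{i=1}^{k} d_i = 1). Hence the bound Σ α_i − f ≤ (2 − 1/k) Σ d_i for feasible solutions of the second factor-revealing LP is tight. -/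
/-!
Every facility-opening constraint (iv) of the example holds with equality. For `i = 1` the first
client contributes `1 − 1/k` and each of the others `2 − 1/k`, which add up to `2(k − 1)`; for
`i ≥ 2` the clients `j < i` other than the first contribute `r_{j,i} = 2` each and the clients
`j ≥ i` contribute `α_i = 2` each, again `2(k − 1)` in total.
-/

open Finset

theorem sum_Icc_one_ite {R : Type*} [Ring R] (n : ℕ) (hn : 1 ≤ n) (a b : R) :
    ∑ i ∈ Icc 1 n, (if i = 1 then a else b) = a + ((n : R) - 1) * b := by
  have hsplit : ∀ i, (if i = 1 then a else b) = b + if i = 1 then a - b else 0 := by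
    intro i; split_ifs <;> abel
  rw [sum_congr rfl fun i _ => hsplit i, sum_add_distrib, sum_const, sum_ite_eq',
    if_pos (mem_Icc.2 ⟨le_rfl, hn⟩), Nat.card_Icc, Nat.add_sub_cancel, nsmul_eq_mul]
  noncomm_ring

noncomputable def tightAlpha (k : ℕ) (i : ℕ) : ℝ := if i = 1 then 2 - 1 / (k : ℝ) else 2

def tightD (i : ℕ) : ℝ := if i = 1 then 1 else 0

def tightR (j _ : ℕ) : ℝ := if j = 1 then 1 else 2

theorem tight_budget_of_two_le {k i : ℕ} (hi : 2 ≤ i) (hik : i ≤ k) :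
    ∑ j ∈ Icc 1 (i - 1), max (tightR j i - tightD j) 0
      + ∑ j ∈ Icc i k, max (tightAlpha k i - tightD j) 0 = 2 * ((k : ℝ) - 1) := by
  have hearlier : ∀ j, max (tightR j i - tightD j) 0 = if j = 1 then 0 else 2 := by
    intro j; unfold tightR tightD; split_ifs <;> norm_num
  have hlater : ∀ j ∈ Icc i k, max (tightAlpha k i - tightD j) 0 = 2 := by
    intro j hj
    have hj1 : j ≠ 1 := by have := (mem_Icc.1 hj).1; omega
    simp only [tightAlpha, tightD, if_neg hj1, if_neg (by omega : i ≠ 1)]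
    norm_num
  rw [sum_congr rfl fun j _ => hearlier j, sum_congr rfl hlater,
    sum_Icc_one_ite (i - 1) (by omega), sum_const, Nat.card_Icc, nsmul_eq_mul,
    Nat.cast_sub (by omega : 1 ≤ i), Nat.cast_sub (by omega : i ≤ k + 1)]
  push_cast
  ring

section TightExample

variable {k : ℕ} (hk : 2 ≤ k)
include hk

theorem one_le_tightAlpha (i : ℕ) : 1 ≤ tightAlpha k i := by
  have : 1 / (k : ℝ) ≤ 1 := div_le_one_of_le₀ (by exact_mod_cast (by omega : 1 ≤ k)) k.cast_nonneg
  unfold tightAlpha; split_ifs <;> linarith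

theorem tight_budget_one :
    ∑ j ∈ Icc 1 k, max (tightAlpha k 1 - tightD j) 0 = 2 * ((k : ℝ) - 1) := by
  have hk0 : (k : ℝ) ≠ 0 := by positivity
  have hsummand : ∀ j, max (tightAlpha k 1 - tightD j) 0
      = if j = 1 then 1 - 1 / (k : ℝ) else 2 - 1 / (k : ℝ) := by
    intro j
    have := one_le_tightAlpha hk 1
    unfold tightAlpha tightD at *
    split_ifs at * <;> first | contradiction | (rw [max_eq_left] <;> linarith)
  rw [sum_congr rfl fun j _ => hsummand j, sum_Icc_one_ite k (by omega)]
  field_simp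
  ring

theorem tight_feasible :
    FRLP2Feasible k (tightAlpha k) tightD tightR (2 * ((k : ℝ) - 1)) := by
  have hk2 : (2 : ℝ) ≤ k := by exact_mod_cast hk
  refine ⟨fun i _ => zero_le_one.trans (one_le_tightAlpha hk i), ?_, by linarith, ?_, ?_,
    fun _ _ _ _ _ => le_rfl, ?_, ?_⟩
  · intro i _; unfold tightD; split_ifs <;> norm_num
  · intro j i _ _ _; unfold tightR; split_ifs <;> norm_num
  · intro i hi _
    have : 0 ≤ 1 / (k : ℝ) := by positivity
    simp only [tightAlpha, if_neg (by omega : i + 1 ≠ 1)]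
    split_ifs <;> linarith
  · intro j i _ hji _
    have : 0 ≤ 1 / (k : ℝ) := by positivity
    simp only [tightAlpha, tightD, tightR, if_neg (by omega : i ≠ 1)]
    split_ifs <;> linarith
  · intro i hi
    obtain ⟨hi1, hik⟩ := mem_Icc.1 hi
    rcases (by omega : i = 1 ∨ 2 ≤ i) with rfl | hi2
    · simp [tight_budget_one hk]
    · exact (tight_budget_of_two_le hi2 hik).le

end TightExample

/-- The explicit tight example for the bound `Σ α_i − f ≤ (2 − 1/k) Σ d_i`:
`α_1 = 2 − 1/k`, `α_i = 2` otherwise; `d_1 = 1`, `d_i = 0` otherwise;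
`r_{1,i} = 1`, `r_{j,i} = 2` for `j ≥ 2`; `f = 2(k−1)`. -/
theorem frlp2_lmp_tight (k : ℕ) (hk : 2 ≤ k) :
    FRLP2Feasible k (fun i => if i = 1 then 2 - 1 / (k : ℝ) else 2)
      (fun i => if i = 1 then 1 else 0)
      (fun j _ => if j = 1 then 1 else 2)
      (2 * ((k : ℝ) - 1)) ∧
    (∑ i ∈ Finset.Icc 1 k, (if i = 1 then 2 - 1 / (k : ℝ) else 2)) - 2 * ((k : ℝ) - 1)
      = (2 - 1 / (k : ℝ)) * ∑ i ∈ Finset.Icc 1 k, (if i = 1 then (1 : ℝ) else 0) ∧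
    ∑ i ∈ Finset.Icc 1 k, (if i = 1 then (1 : ℝ) else 0) = 1 := by
  have hdemand : ∑ i ∈ Icc 1 k, (if i = 1 then (1 : ℝ) else 0) = 1 := by
    rw [sum_Icc_one_ite k (by omega)]; ring
  refine ⟨tight_feasible hk, ?_, hdemand⟩
  rw [hdemand, sum_Icc_one_ite k (by omega)]
  ring
end

section
/- Let F and C be finite sets (of facilities and cities), let f : F → ℝ with f_i ≥ 0 for all i, let c : F × C → ℝ with c_{ij} ≥ 0 for all i, j, let α : C → ℝ, and let γ ≥ 0. Suppose that for every facility i ∈ F and every subset A ⊆ C, Σ_{j ∈ A} α_j ≤ γ · (f_i + Σ_{j ∈ A} c_{ij}). Then for every assignment φ : C → F, Σ_{j ∈ C} α_j ≤ γ · (Σ_{i ∈ φ(C)} f_i + Σ_{j ∈ C} c_{φ(j), j}), where φ(C) denotes the image of φ. In particular, Σ_{j ∈ C} α_j is at most γ times the total cost (facility opening cost plus connection cost) of any feasible solution of the facility location instance (F, C, f, c). -/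
/-! Grouping the cities by the facility serving them splits any solution into the stars
`(i, φ⁻¹(i))` of its open facilities; the cost of the solution is the sum of the costs of
these stars, and applying the star inequality to each of them and summing gives the bound. -/

open Finset

namespace FacilityLocation

variable {F C : Type*} [Fintype C] [DecidableEq F]

def starCost (f : F → ℝ) (c : F → C → ℝ) (i : F) (A : Finset C) : ℝ :=
  f i + ∑ j ∈ A, c i j

theorem sum_eq_sum_image_sum_fiber {M : Type*} [AddCommMonoid M] (φ : C → F) (g : C → M) :
    ∑ j, g j = ∑ i ∈ univ.image φ, ∑ j ∈ univ.filter (φ · = i), g j :=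
  (sum_fiberwise_of_maps_to (fun j _ => mem_image_of_mem φ (mem_univ j)) g).symm

theorem assignment_cost_eq_sum_starCost (f : F → ℝ) (c : F → C → ℝ) (φ : C → F) :
    ∑ i ∈ univ.image φ, f i + ∑ j, c (φ j) j =
      ∑ i ∈ univ.image φ, starCost f c i (univ.filter (φ · = i)) := by
  have fiber_cost : ∀ i, ∑ j ∈ univ.filter (φ · = i), c (φ j) j =
      ∑ j ∈ univ.filter (φ · = i), c i j :=
    fun i => sum_congr rfl fun j hj => by rw [(mem_filter.mp hj).2]
  simp only [starCost, sum_add_distrib, sum_eq_sum_image_sum_fiber φ (fun j => c (φ j) j),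
    fiber_cost]

end FacilityLocation

open FacilityLocation in
theorem dual_fitting_bound_general {F C : Type*} [Fintype C] [DecidableEq F]
    (f : F → ℝ) (c : F → C → ℝ) (α : C → ℝ) (γ : ℝ)
    (hstar : ∀ (i : F) (A : Finset C), ∑ j ∈ A, α j ≤ γ * (f i + ∑ j ∈ A, c i j)) :
    ∀ φ : C → F,
      ∑ j : C, α j ≤ γ * (∑ i ∈ Finset.univ.image φ, f i + ∑ j : C, c (φ j) j) := by
  intro φ
  calc ∑ j, α j = ∑ i ∈ univ.image φ, ∑ j ∈ univ.filter (φ · = i), α j :=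
        sum_eq_sum_image_sum_fiber φ α
    _ ≤ ∑ i ∈ univ.image φ, γ * starCost f c i (univ.filter (φ · = i)) :=
        sum_le_sum fun i _ => hstar i _
    _ = γ * (∑ i ∈ univ.image φ, f i + ∑ j, c (φ j) j) := by
        rw [← mul_sum, assignment_cost_eq_sum_starCost]

/-- If the contributions `α_j` are paid for by every star up to a factor `γ`
(i.e. `Σ_{j ∈ A} α_j ≤ γ (f_i + Σ_{j ∈ A} c_{ij})` for every facility `i` and set `A` of
cities), then `Σ_j α_j` is at most `γ` times the total cost of any feasible solution of
the facility location instance, namely any assignment `φ` of cities to facilities. -/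
theorem dual_fitting_bound {F C : Type*} [Fintype F] [Fintype C] [DecidableEq F]
    (f : F → ℝ) (c : F → C → ℝ) (α : C → ℝ) (γ : ℝ)
    (hf : ∀ i, 0 ≤ f i) (hc : ∀ i j, 0 ≤ c i j) (hγ : 0 ≤ γ)
    (hstar : ∀ (i : F) (A : Finset C), ∑ j ∈ A, α j ≤ γ * (f i + ∑ j ∈ A, c i j)) :
    ∀ φ : C → F,
      ∑ j : C, α j ≤ γ * (∑ i ∈ Finset.univ.image φ, f i + ∑ j : C, c (φ j) j) :=
  dual_fitting_bound_general f c α γ hstar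
end

section
/- Let 0 < p_1 < p_2 < 1 be real numbers. For each positive integer k define l_i = ⌊p_2 k⌋ for 1 ≤ i ≤ ⌊p_1 k⌋ and l_i = k for ⌊p_1 k⌋ < i ≤ ⌊p_2 k⌋, and set ζ_k = Σ_{i=1}^{⌊p_2 k⌋} 1/(l_i − i + 1). Then ζ_k converges, as k → ∞, to ln( p_2 (1 − p_1) / ((p_2 − p_1)(1 − p_2)) ) = ln(p_2/(p_2 − p_1)) + ln((1 − p_1)/(1 − p_2)). -/
/-!
Splitting `ζ_k` at `a = ⌊p₁k⌋` and writing `m = ⌊p₂k⌋`, both pieces are differences of harmonic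
numbers: `ζ_k = (H_m - H_{m-a}) + (H_{k-a} - H_{k-m})`. Since `H_n = log n + γ + o(1)`, a difference
`H_{f k} - H_{g k}` of harmonic numbers at indices growing linearly in `k` tends to the logarithm
of the ratio of the growth rates, here `p₂ / (p₂ - p₁)` and `(1 - p₁) / (1 - p₂)`.
-/

open Filter Finset Topology

lemma sum_Ioc_one_div_sub_add_one {a b k : ℕ} (hab : a ≤ b) (hbk : b ≤ k) :
    ∑ i ∈ Ioc a b, (1 : ℝ) / ((k - i + 1 : ℕ) : ℝ) = harmonic (k - a) - harmonic (k - b) := by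
  induction b, hab using Nat.le_induction with
  | base => simp
  | succ b hab ih =>
    rw [sum_Ioc_succ_top (by omega), ih (by omega), show k - b = k - (b + 1) + 1 by omega,
      harmonic_succ]
    push_cast
    ring

lemma sum_Icc_one_div_ite_sub_add_one {a m k : ℕ} (ham : a ≤ m) (hmk : m ≤ k) :
    ∑ i ∈ Icc 1 m, (1 : ℝ) / (((if i ≤ a then m else k) - i + 1 : ℕ) : ℝ)
      = (harmonic m - harmonic (m - a) : ℝ) + (harmonic (k - a) - harmonic (k - m)) := by
  rw [show Icc 1 m = Ioc 0 m from Icc_add_one_left_eq_Ioc 0 m, ← sum_Ioc_consecutive _ (Nat.zero_le a) ham]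
  have below : ∑ i ∈ Ioc 0 a, (1 : ℝ) / (((if i ≤ a then m else k) - i + 1 : ℕ) : ℝ)
      = ∑ i ∈ Ioc 0 a, (1 : ℝ) / ((m - i + 1 : ℕ) : ℝ) :=
    sum_congr rfl fun i hi => by rw [if_pos (mem_Ioc.mp hi).2]
  have above : ∑ i ∈ Ioc a m, (1 : ℝ) / (((if i ≤ a then m else k) - i + 1 : ℕ) : ℝ)
      = ∑ i ∈ Ioc a m, (1 : ℝ) / ((k - i + 1 : ℕ) : ℝ) :=
    sum_congr rfl fun i hi => by rw [if_neg (not_le.mpr (mem_Ioc.mp hi).1)]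
  rw [below, above, sum_Ioc_one_div_sub_add_one (Nat.zero_le a) ham,
    sum_Ioc_one_div_sub_add_one ham hmk, Nat.sub_zero]

lemma Filter.Tendsto.natSub_div {ι : Type*} {l : Filter ι} {r : ι → ℝ} {f g : ι → ℕ} {α β : ℝ}
    (hf : Tendsto (fun x => (f x : ℝ) / r x) l (𝓝 α))
    (hg : Tendsto (fun x => (g x : ℝ) / r x) l (𝓝 β)) (hgf : ∀ x, g x ≤ f x) :
    Tendsto (fun x => ((f x - g x : ℕ) : ℝ) / r x) l (𝓝 (α - β)) :=
  (hf.sub hg).congr fun x => by rw [Nat.cast_sub (hgf x), sub_div]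

lemma tendsto_atTop_of_tendsto_div_natCast {f : ℕ → ℕ} {c : ℝ} (hc : 0 < c)
    (h : Tendsto (fun k => (f k : ℝ) / k) atTop (𝓝 c)) : Tendsto f atTop atTop := by
  rw [← tendsto_natCast_atTop_iff (R := ℝ)]
  refine (h.pos_mul_atTop hc tendsto_natCast_atTop_atTop).congr' ?_
  filter_upwards [eventually_ne_atTop 0] with k hk
  field_simp

lemma tendsto_harmonic_sub_harmonic {ι : Type*} {l : Filter ι} {f g : ι → ℕ} {c : ℝ}
    (hf : Tendsto f l atTop) (hg : Tendsto g l atTop) (hc : 0 < c)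
    (hfg : Tendsto (fun x => (f x : ℝ) / g x) l (𝓝 c)) :
    Tendsto (fun x => (harmonic (f x) - harmonic (g x) : ℝ)) l (𝓝 (Real.log c)) := by
  have h := ((Real.tendsto_harmonic_sub_log.comp hf).sub
    (Real.tendsto_harmonic_sub_log.comp hg)).add ((Real.continuousAt_log hc.ne').tendsto.comp hfg)
  rw [sub_self, zero_add] at h
  refine h.congr' ?_
  filter_upwards [hf.eventually_ne_atTop 0, hg.eventually_ne_atTop 0] with x hfx hgx
  simp only [Function.comp_apply, Real.log_div (Nat.cast_ne_zero.mpr hfx) (Nat.cast_ne_zero.mpr hgx)]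
  ring

lemma tendsto_harmonic_sub_harmonic_of_div_natCast {f g : ℕ → ℕ} {α β : ℝ} (hα : 0 < α)
    (hβ : 0 < β) (hf : Tendsto (fun k => (f k : ℝ) / k) atTop (𝓝 α))
    (hg : Tendsto (fun k => (g k : ℝ) / k) atTop (𝓝 β)) :
    Tendsto (fun k => (harmonic (f k) - harmonic (g k) : ℝ)) atTop (𝓝 (Real.log (α / β))) := by
  refine tendsto_harmonic_sub_harmonic (tendsto_atTop_of_tendsto_div_natCast hα hf)
    (tendsto_atTop_of_tendsto_div_natCast hβ hg) (div_pos hα hβ) ((hf.div hg hβ.ne').congr' ?_)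
  filter_upwards [eventually_ne_atTop 0] with k hk
  simp only [Pi.div_apply]
  field_simp

/-- The harmonic-type sums `ζ_k = Σ_{i=1}^{⌊p₂k⌋} 1/(l_i − i + 1)`, where `l_i = ⌊p₂k⌋`
for `i ≤ ⌊p₁k⌋` and `l_i = k` otherwise, converge to
`ln(p₂(1−p₁)/((p₂−p₁)(1−p₂))) = ln(p₂/(p₂−p₁)) + ln((1−p₁)/(1−p₂))` as `k → ∞`. -/
theorem zeta_tendsto (p₁ p₂ : ℝ) (hp₁ : 0 < p₁) (hp₁₂ : p₁ < p₂) (hp₂ : p₂ < 1) :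
    Filter.Tendsto
      (fun k : ℕ =>
        ∑ i ∈ Finset.Icc 1 (⌊p₂ * (k : ℝ)⌋₊),
          (1 : ℝ) /
            (((if i ≤ ⌊p₁ * (k : ℝ)⌋₊ then ⌊p₂ * (k : ℝ)⌋₊ else k) - i + 1 : ℕ) : ℝ))
      Filter.atTop
      (nhds (Real.log (p₂ * (1 - p₁) / ((p₂ - p₁) * (1 - p₂))))) ∧
    Real.log (p₂ * (1 - p₁) / ((p₂ - p₁) * (1 - p₂)))
      = Real.log (p₂ / (p₂ - p₁)) + Real.log ((1 - p₁) / (1 - p₂)) := by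
  have ham : ∀ k : ℕ, ⌊p₁ * (k : ℝ)⌋₊ ≤ ⌊p₂ * (k : ℝ)⌋₊ := fun k =>
    Nat.floor_mono (by gcongr)
  have hmk : ∀ k : ℕ, ⌊p₂ * (k : ℝ)⌋₊ ≤ k := fun k =>
    Nat.floor_le_of_le (by nlinarith [k.cast_nonneg (α := ℝ)])
  have hA := (tendsto_nat_floor_mul_div_atTop hp₁.le).comp tendsto_natCast_atTop_atTop
  have hM := (tendsto_nat_floor_mul_div_atTop (hp₁.trans hp₁₂).le).comp tendsto_natCast_atTop_atTop
  have hK : Tendsto (fun k : ℕ => (k : ℝ) / k) atTop (𝓝 1) :=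
    tendsto_const_nhds.congr' <| (eventually_ne_atTop 0).mono fun k hk => by field_simp
  have hlog : Real.log (p₂ * (1 - p₁) / ((p₂ - p₁) * (1 - p₂)))
      = Real.log (p₂ / (p₂ - p₁)) + Real.log ((1 - p₁) / (1 - p₂)) := by
    rw [← Real.log_mul (div_pos (by linarith) (by linarith)).ne'
      (div_pos (by linarith) (by linarith)).ne', div_mul_div_comm]
  refine ⟨?_, hlog⟩
  rw [hlog]
  refine ((tendsto_harmonic_sub_harmonic_of_div_natCast (by linarith) (by linarith) hM
    (hM.natSub_div hA ham)).add (tendsto_harmonic_sub_harmonic_of_div_natCast (by linarith)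
    (by linarith) (hK.natSub_div hA fun k => (ham k).trans (hmk k)) (hK.natSub_div hM hmk))).congr
    fun k => (sum_Icc_one_div_ite_sub_add_one (ham k) (hmk k)).symm
end
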